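/- Let ε be real and let b, c: ℝ² → ℝ be smooth with c nowhere zero, solving the Thrice-Modified Kaup–Boussinesq system c_y = ∂_z[−(1/2)b(1 + b²) + ε(cb_z − bc_z)], b_y = ∂_z[−(1 − b²)²/(2c) + ε(bb_z + ((1 − b²)/c)c_z)]. Define a = (1 − b² − 2εc_z)/c. Then (b, a) solves the Twice-Modified Kaup–Boussinesq system: b_y = (1/2)∂_z[a(b² − 1) + 2εbb_z] and a_y = (1/2)∂_z[a²b − 2εba_z − 4ε²b_zz]. -/

import Mathlib

open Function

noncomputable def pz (f : ℝ → ℝ → ℝ) : ℝ → ℝ → ℝ := fun z y => deriv (fun t => f t y) z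
noncomputable def py (f : ℝ → ℝ → ℝ) : ℝ → ℝ → ℝ := fun z y => deriv (fun s => f z s) y

lemma hasDerivAt_pz (f : ℝ → ℝ → ℝ) (hf : ContDiff ℝ (⊤ : ℕ∞) (Function.uncurry f)) (z y : ℝ) :
    HasDerivAt (fun t => f t y) (pz f z y) z := by
  have h : DifferentiableAt ℝ (fun t => f t y) z :=
    (hf.comp (contDiff_id.prodMk contDiff_const)).differentiable (by simp) z
  exact h.hasDerivAt

lemma hasDerivAt_py (f : ℝ → ℝ → ℝ) (hf : ContDiff ℝ (⊤ : ℕ∞) (Function.uncurry f)) (z y : ℝ) :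
    HasDerivAt (fun s => f z s) (py f z y) y := by
  have h : DifferentiableAt ℝ (fun s => f z s) y :=
    (hf.comp (contDiff_const.prodMk contDiff_id)).differentiable (by simp) y
  exact h.hasDerivAt

lemma pz_eq_fderiv (f : ℝ → ℝ → ℝ) (hf : ContDiff ℝ (⊤ : ℕ∞) (Function.uncurry f)) (z y : ℝ) :
    pz f z y = fderiv ℝ (Function.uncurry f) (z, y) (1, 0) := by
  have h : HasDerivAt (fun t => f t y) (fderiv ℝ (Function.uncurry f) (z, y) ((1:ℝ), (0:ℝ))) z :=
    ((hf.differentiable nofun (z, y)).hasFDerivAt).comp_hasDerivAt (f := fun t => (t, y)) z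
      ((hasDerivAt_id z).prodMk (hasDerivAt_const z y))
  exact h.deriv

lemma py_eq_fderiv (f : ℝ → ℝ → ℝ) (hf : ContDiff ℝ (⊤ : ℕ∞) (Function.uncurry f)) (z y : ℝ) :
    py f z y = fderiv ℝ (Function.uncurry f) (z, y) (0, 1) := by
  have h : HasDerivAt (fun s => f z s) (fderiv ℝ (Function.uncurry f) (z, y) ((0:ℝ), (1:ℝ))) y :=
    ((hf.differentiable nofun (z, y)).hasFDerivAt).comp_hasDerivAt y
      ((hasDerivAt_const y z).prodMk (hasDerivAt_id y))
  exact h.deriv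

lemma pz_contDiff (f : ℝ → ℝ → ℝ) (hf : ContDiff ℝ (⊤ : ℕ∞) (Function.uncurry f)) :
    ContDiff ℝ (⊤ : ℕ∞) (Function.uncurry (pz f)) := by
  have h : Function.uncurry (pz f) = fun p : ℝ × ℝ => fderiv ℝ (Function.uncurry f) p ((1:ℝ), (0:ℝ)) := by
    funext p; exact pz_eq_fderiv f hf p.1 p.2
  rw [h]
  exact (ContinuousLinearMap.apply ℝ ℝ ((1:ℝ), (0:ℝ))).contDiff.comp (hf.fderiv_right (by simp))

lemma clairaut (f : ℝ → ℝ → ℝ) (hf : ContDiff ℝ (⊤ : ℕ∞) (Function.uncurry f)) (z y : ℝ) :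
    py (pz f) z y = pz (py f) z y := by
  have hd : ∀ p : ℝ × ℝ, HasFDerivAt (Function.uncurry f) (fderiv ℝ (Function.uncurry f) p) p :=
    fun p => (hf.differentiable (by simp) p).hasFDerivAt
  have h2 : HasFDerivAt (fderiv ℝ (Function.uncurry f))
      (fderiv ℝ (fderiv ℝ (Function.uncurry f)) (z, y)) (z, y) :=
    (((hf.fderiv_right (m := (⊤ : ℕ∞)) (by simp)).differentiable (by simp)) (z, y)).hasFDerivAt
  have hsymm := second_derivative_symmetric hd h2 ((0:ℝ), (1:ℝ)) ((1:ℝ), (0:ℝ))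
  have hL : py (pz f) z y = fderiv ℝ (fderiv ℝ (Function.uncurry f)) (z, y) (0, 1) (1, 0) := by
    have hfun : (fun s => pz f z s) = fun s => fderiv ℝ (Function.uncurry f) (z, s) (1, 0) :=
      funext fun s => pz_eq_fderiv f hf z s
    have H : HasDerivAt (fun s => fderiv ℝ (Function.uncurry f) (z, s) ((1:ℝ), (0:ℝ)))
        (fderiv ℝ (fderiv ℝ (Function.uncurry f)) (z, y) (0, 1) (1, 0)) y := by
      have Hin : HasDerivAt (fun s => fderiv ℝ (Function.uncurry f) (z, s))
          (fderiv ℝ (fderiv ℝ (Function.uncurry f)) (z, y) ((0:ℝ), (1:ℝ))) y :=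
        h2.comp_hasDerivAt y ((hasDerivAt_const y z).prodMk (hasDerivAt_id y))
      exact Hin.clm_apply (hasDerivAt_const y ((1:ℝ), (0:ℝ))) |>.congr_deriv (by simp)
    show deriv (fun s => pz f z s) y = _
    rw [hfun]
    exact H.deriv
  have hR : pz (py f) z y = fderiv ℝ (fderiv ℝ (Function.uncurry f)) (z, y) (1, 0) (0, 1) := by
    have hfun : (fun t => py f t y) = fun t => fderiv ℝ (Function.uncurry f) (t, y) (0, 1) :=
      funext fun t => py_eq_fderiv f hf t y
    have H : HasDerivAt (fun t => fderiv ℝ (Function.uncurry f) (t, y) ((0:ℝ), (1:ℝ)))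
        (fderiv ℝ (fderiv ℝ (Function.uncurry f)) (z, y) (1, 0) (0, 1)) z := by
      have Hin : HasDerivAt (fun t => fderiv ℝ (Function.uncurry f) (t, y))
          (fderiv ℝ (fderiv ℝ (Function.uncurry f)) (z, y) ((1:ℝ), (0:ℝ))) z :=
        h2.comp_hasDerivAt z ((hasDerivAt_id z).prodMk (hasDerivAt_const z y))
      exact Hin.clm_apply (hasDerivAt_const z ((0:ℝ), (1:ℝ))) |>.congr_deriv (by simp)
    show deriv (fun t => py f t y) z = _
    rw [hfun]
    exact H.deriv
  rw [hL, hR, hsymm]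

noncomputable def AF (ε : ℝ) (b c : ℝ → ℝ → ℝ) : ℝ → ℝ → ℝ := fun z y =>
  (1 - (b z y)^2 - 2*ε * pz c z y) / c z y

lemma AF_contDiff (ε : ℝ) (b c : ℝ → ℝ → ℝ) (hb : ContDiff ℝ (⊤ : ℕ∞) (Function.uncurry b))
    (hc : ContDiff ℝ (⊤ : ℕ∞) (Function.uncurry c)) (hc0 : ∀ z y, c z y ≠ 0) :
    ContDiff ℝ (⊤ : ℕ∞) (Function.uncurry (AF ε b c)) :=
  ((contDiff_const.sub (hb.pow 2)).sub (contDiff_const.mul (pz_contDiff c hc))).div hc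
    fun p => hc0 p.1 p.2

/-- The third Miura transformation (6.15): solutions of the Thrice-Modified
Kaup–Boussinesq system (4.9) map to solutions of the Twice-Modified
Kaup–Boussinesq system (6.12) via `a = (1 − b² − 2εc_z)/c`. -/
theorem stmt_17 (ε : ℝ) (b c : ℝ → ℝ → ℝ)
    (hb : ContDiff ℝ (⊤ : ℕ∞) (Function.uncurry b))
    (hc : ContDiff ℝ (⊤ : ℕ∞) (Function.uncurry c))
    (hc0 : ∀ z y, c z y ≠ 0)
    (hsys1 : ∀ z y, deriv (fun s => c z s) y =
      deriv (fun z' => -(1/2) * b z' y * (1 + (b z' y)^2)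
        + ε * (c z' y * deriv (fun t => b t y) z'
          - b z' y * deriv (fun t => c t y) z')) z)
    (hsys2 : ∀ z y, deriv (fun s => b z s) y =
      deriv (fun z' => -((1 - (b z' y)^2)^2) / (2 * c z' y)
        + ε * (b z' y * deriv (fun t => b t y) z'
          + ((1 - (b z' y)^2) / c z' y) * deriv (fun t => c t y) z')) z) :
    let a : ℝ → ℝ → ℝ := fun z y =>
      (1 - (b z y)^2 - 2*ε * deriv (fun t => c t y) z) / c z y
    (∀ z y, deriv (fun s => b z s) y =
        (1/2) * deriv (fun z' => a z' y * ((b z' y)^2 - 1)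
          + 2*ε * b z' y * deriv (fun t => b t y) z') z) ∧
    (∀ z y, deriv (fun s => a z s) y =
        (1/2) * deriv (fun z' => (a z' y)^2 * b z' y
          - 2*ε * b z' y * deriv (fun t => a t y) z'
          - 4*ε^2 * deriv (fun t => deriv (fun t' => b t' y) t) z') z) := by
  intro a
  have hb1 := pz_contDiff b hb
  have hb2 := pz_contDiff _ hb1
  have hc1 := pz_contDiff c hc
  have hc2 := pz_contDiff _ hc1
  have hA : ContDiff ℝ (⊤ : ℕ∞) (Function.uncurry (AF ε b c)) := AF_contDiff ε b c hb hc hc0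
  have hA1 := pz_contDiff _ hA
  constructor
  · intro z y
    rw [hsys2 z y]
    have key : (fun z' => a z' y * ((b z' y)^2 - 1) + 2*ε * b z' y * deriv (fun t => b t y) z')
        = fun z' => 2 * (-((1 - (b z' y)^2)^2) / (2 * c z' y)
          + ε * (b z' y * deriv (fun t => b t y) z'
            + ((1 - (b z' y)^2) / c z' y) * deriv (fun t => c t y) z')) := by
      funext t
      have h0 := hc0 t y
      show (1 - (b t y)^2 - 2*ε * deriv (fun u => c u y) t) / c t y * ((b t y)^2 - 1)
          + 2*ε * b t y * deriv (fun u => b u y) t = _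
      field_simp
      ring
    rw [key, deriv_const_mul_field]
    ring
  · intro z y
    have Db : ∀ t : ℝ, HasDerivAt (fun u => b u y) (pz b t y) t := fun t => hasDerivAt_pz b hb t y
    have Db1 : ∀ t : ℝ, HasDerivAt (fun u => pz b u y) (pz (pz b) t y) t :=
      fun t => hasDerivAt_pz _ hb1 t y
    have Db2 : ∀ t : ℝ, HasDerivAt (fun u => pz (pz b) u y) (pz (pz (pz b)) t y) t :=
      fun t => hasDerivAt_pz _ hb2 t y
    have Dc : ∀ t : ℝ, HasDerivAt (fun u => c u y) (pz c t y) t := fun t => hasDerivAt_pz c hc t y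
    have Dc1 : ∀ t : ℝ, HasDerivAt (fun u => pz c u y) (pz (pz c) t y) t :=
      fun t => hasDerivAt_pz _ hc1 t y
    have Dc2 : ∀ t : ℝ, HasDerivAt (fun u => pz (pz c) u y) (pz (pz (pz c)) t y) t :=
      fun t => hasDerivAt_pz _ hc2 t y
    have DA : ∀ t : ℝ, HasDerivAt (fun u => AF ε b c u y) (pz (AF ε b c) t y) t :=
      fun t => hasDerivAt_pz _ hA t y
    have DA1 : ∀ t : ℝ, HasDerivAt (fun u => pz (AF ε b c) u y) (pz (pz (AF ε b c)) t y) t :=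
      fun t => hasDerivAt_pz _ hA1 t y
    -- c_y expanded
    have h_cy := (hsys1 z y).trans ((((Db z).const_mul (-(1/2))).mul
        ((hasDerivAt_const z (1:ℝ)).add ((Db z).pow 2))).add
      ((((Dc z).mul (Db1 z)).sub ((Db z).mul (Dc1 z))).const_mul ε)).deriv
    have e_cy : py c z y = -(1/2) * pz b z y * (1 + 3*(b z y)^2)
        + ε * (c z y * pz (pz b) z y - b z y * pz (pz c) z y) := by
      show deriv (fun s => c z s) y = _
      rw [h_cy]; norm_num; ring
    -- b_y expanded
    have h_by := (hsys2 z y).trans ((((((hasDerivAt_const z (1:ℝ)).sub ((Db z).pow 2)).pow 2).neg).div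
        ((Dc z).const_mul 2) (mul_ne_zero two_ne_zero (hc0 z y))).add
      ((((Db z).mul (Db1 z)).add
        ((((hasDerivAt_const z (1:ℝ)).sub ((Db z).pow 2)).div (Dc z) (hc0 z y)).mul
          (Dc1 z))).const_mul ε)).deriv
    have e_by : py b z y = 2*b z y*pz b z y*(1 - (b z y)^2)/c z y
        + (1 - (b z y)^2)^2*pz c z y/(2*(c z y)^2)
        + ε*((pz b z y)^2 + b z y*pz (pz b) z y
          + (-(2*b z y*pz b z y)*pz c z y + (1 - (b z y)^2)*pz (pz c) z y)/c z y
          - (1 - (b z y)^2)*(pz c z y)^2/(c z y)^2) := by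
      have h0 := hc0 z y
      show deriv (fun s => b z s) y = _
      rw [h_by]; simp only [Pi.add_apply, Pi.sub_apply, Pi.mul_apply, Pi.div_apply, Pi.pow_apply, Pi.neg_apply]; field_simp; ring
    -- c_{zy} via Clairaut
    have e_czy : py (pz c) z y = -(1/2) * pz (pz b) z y * (1 + 3*(b z y)^2)
        - 3*b z y*(pz b z y)^2
        + ε * (pz c z y * pz (pz b) z y + c z y * pz (pz (pz b)) z y
          - pz b z y * pz (pz c) z y - b z y * pz (pz (pz c)) z y) := by
      rw [clairaut c hc z y]
      have hfun : (fun t => py c t y) = fun t => -(1/2) * pz b t y * (1 + 3*(b t y)^2)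
          + ε * (c t y * pz (pz b) t y - b t y * pz (pz c) t y) := by
        funext t
        have ht := (hsys1 t y).trans ((((Db t).const_mul (-(1/2))).mul
            ((hasDerivAt_const t (1:ℝ)).add ((Db t).pow 2))).add
          ((((Dc t).mul (Db1 t)).sub ((Db t).mul (Dc1 t))).const_mul ε)).deriv
        show deriv (fun s => c t s) y = _
        rw [ht]; norm_num; ring
      show deriv (fun t => py c t y) z = _
      rw [hfun]
      exact ((((Db1 z).const_mul (-(1/2))).mul
          ((hasDerivAt_const z (1:ℝ)).add (((Db z).pow 2).const_mul 3))).add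
        ((((Dc z).mul (Db2 z)).sub ((Db z).mul (Dc2 z))).const_mul ε)).deriv.trans
        (by norm_num; ring)
    -- a_z expanded, pointwise in t
    have PA1 : ∀ t : ℝ, pz (AF ε b c) t y =
        ((-(2*b t y*pz b t y) - 2*ε*pz (pz c) t y)*c t y
          - (1 - (b t y)^2 - 2*ε*pz c t y)*pz c t y)/(c t y)^2 := by
      intro t
      have ht := ((((hasDerivAt_const t (1:ℝ)).sub ((Db t).pow 2)).sub
          ((Dc1 t).const_mul (2*ε))).div (Dc t) (hc0 t y)).deriv
      show deriv (fun u => AF ε b c u y) t = _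
      rw [show (fun u => AF ε b c u y)
          = fun u => (1 - (b u y)^2 - 2*ε * pz c u y) / c u y from rfl]
      refine ht.trans ?_
      norm_num
    -- a_{zz} expanded
    have PA2 : pz (pz (AF ε b c)) z y =
        (((-(2*((pz b z y)^2 + b z y * pz (pz b) z y)) - 2*ε*pz (pz (pz c)) z y)*c z y
            - (1 - (b z y)^2 - 2*ε*pz c z y)*pz (pz c) z y)*c z y
          - 2*((-(2*b z y*pz b z y) - 2*ε*pz (pz c) z y)*c z y
            - (1 - (b z y)^2 - 2*ε*pz c z y)*pz c z y)*pz c z y)/(c z y)^3 := by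
      show deriv (fun t => pz (AF ε b c) t y) z = _
      rw [show (fun t => pz (AF ε b c) t y)
          = fun t => ((-(2*b t y*pz b t y) - 2*ε*pz (pz c) t y)*c t y
            - (1 - (b t y)^2 - 2*ε*pz c t y)*pz c t y)/(c t y)^2 from funext PA1]
      have h0 := hc0 z y
      have h2 := HasDerivAt.deriv ((((((((Db z).const_mul 2).mul (Db1 z)).neg).sub
            ((Dc2 z).const_mul (2*ε))).mul (Dc z)).sub
          ((((hasDerivAt_const z (1:ℝ)).sub ((Db z).pow 2)).sub
            ((Dc1 z).const_mul (2*ε))).mul (Dc1 z))).div ((Dc z).pow 2)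
        (pow_ne_zero 2 (hc0 z y)))
      exact h2.trans (by simp only [Pi.add_apply, Pi.sub_apply, Pi.mul_apply, Pi.div_apply, Pi.pow_apply, Pi.neg_apply]; field_simp; ring)
    -- LHS: a_y
    have hL := HasDerivAt.deriv ((((hasDerivAt_const y (1:ℝ)).sub
        ((hasDerivAt_py b hb z y).pow 2)).sub
      ((hasDerivAt_py (pz c) hc1 z y).const_mul (2*ε))).div (hasDerivAt_py c hc z y) (hc0 z y))
    have eL : deriv (fun s => a z s) y =
        ((-(2*b z y*py b z y) - 2*ε*py (pz c) z y)*c z y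
          - (1 - (b z y)^2 - 2*ε*pz c z y)*py c z y)/(c z y)^2 :=
      hL.trans (by norm_num)
    -- RHS
    have hR := HasDerivAt.deriv (((((DA z).pow 2).mul (Db z)).sub
        (((Db z).const_mul (2*ε)).mul (DA1 z))).sub ((Db2 z).const_mul (4*ε^2)))
    have eR : deriv (fun z' => (a z' y)^2 * b z' y
          - 2*ε * b z' y * deriv (fun t => a t y) z'
          - 4*ε^2 * deriv (fun t => deriv (fun t' => b t' y) t) z') z
        = 2*AF ε b c z y*pz (AF ε b c) z y*b z y + (AF ε b c z y)^2*pz b z y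
          - 2*ε*(pz b z y*pz (AF ε b c) z y + b z y*pz (pz (AF ε b c)) z y)
          - 4*ε^2*pz (pz (pz b)) z y :=
      hR.trans (by norm_num; ring)
    rw [eL, eR, PA1 z, PA2, e_by, e_cy, e_czy]
    have h0 := hc0 z y
    simp only [AF]
    field_simp
    ring
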